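/- arXiv:1910.04391 — 9 statements merged into one kernel-verified Lean document; each statement's English description precedes it below -/
import Mathlib

section
/- The admissible set U_ad of the Ten-Moment equations is a convex cone in ℝ⁶: if u, w ∈ U_ad and s, t > 0, then s·u + t·w ∈ U_ad. In particular, U_ad is convex, closed under addition, and closed under multiplication by positive scalars. -/
noncomputable section

/-- Density of a Ten-Moment state. -/
def rho (u : Fin 6 → ℝ) : ℝ := u 0

/-- First velocity component. -/
def v1 (u : Fin 6 → ℝ) : ℝ := u 1 / u 0

/-- Second velocity component. -/
def v2 (u : Fin 6 → ℝ) : ℝ := u 2 / u 0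

/-- Pressure component `p₁₁`. -/
def p11 (u : Fin 6 → ℝ) : ℝ := 2 * u 3 - (u 1) ^ 2 / u 0

/-- Pressure component `p₁₂`. -/
def p12 (u : Fin 6 → ℝ) : ℝ := 2 * u 4 - u 1 * u 2 / u 0

/-- Pressure component `p₂₂`. -/
def p22 (u : Fin 6 → ℝ) : ℝ := 2 * u 5 - (u 2) ^ 2 / u 0

/-- The admissible set: positive density and positive definite pressure tensor. -/
def Uad : Set (Fin 6 → ℝ) :=
  {u | 0 < rho u ∧ 0 < p11 u ∧ 0 < p11 u * p22 u - (p12 u) ^ 2}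

lemma cauchy_frac (x y a b : ℝ) (ha : 0 < a) (hb : 0 < b) :
    (x + y) ^ 2 / (a + b) ≤ x ^ 2 / a + y ^ 2 / b := by
  rw [div_add_div _ _ ha.ne' hb.ne', div_le_div_iff₀ (by positivity) (by positivity)]
  nlinarith [sq_nonneg (x * b - y * a), mul_pos ha hb]

lemma Q_form (u : Fin 6 → ℝ) (h : u 0 ≠ 0) (x y : ℝ) :
    p11 u * x ^ 2 + 2 * p12 u * (x * y) + p22 u * y ^ 2
      = 2 * (u 3 * x ^ 2 + 2 * u 4 * (x * y) + u 5 * y ^ 2)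
        - (u 1 * x + u 2 * y) ^ 2 / u 0 := by
  unfold p11 p12 p22
  field_simp
  ring

lemma key (u w : Fin 6 → ℝ) (hu : 0 < u 0) (hw : 0 < w 0)
    (s t : ℝ) (hs : 0 < s) (ht : 0 < t) (x y : ℝ) :
    s * (p11 u * x ^ 2 + 2 * p12 u * (x * y) + p22 u * y ^ 2)
      + t * (p11 w * x ^ 2 + 2 * p12 w * (x * y) + p22 w * y ^ 2)
      ≤ p11 (s • u + t • w) * x ^ 2 + 2 * p12 (s • u + t • w) * (x * y)
        + p22 (s • u + t • w) * y ^ 2 := by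
  have hU : (0:ℝ) < s * u 0 + t * w 0 := by positivity
  have hcomp : ∀ i : Fin 6, (s • u + t • w) i = s * u i + t * w i := by
    intro i; simp [Pi.add_apply, Pi.smul_apply, smul_eq_mul]
  rw [Q_form u hu.ne', Q_form w hw.ne', Q_form (s • u + t • w) (by rw [hcomp]; exact hU.ne')]
  simp only [hcomp]
  have hc := cauchy_frac (s * (u 1 * x + u 2 * y)) (t * (w 1 * x + w 2 * y))
      (s * u 0) (t * w 0) (by positivity) (by positivity)
  have e1 : (s * (u 1 * x + u 2 * y)) ^ 2 / (s * u 0) = s * ((u 1 * x + u 2 * y) ^ 2 / u 0) := by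
    field_simp
  have e2 : (t * (w 1 * x + w 2 * y)) ^ 2 / (t * w 0) = t * ((w 1 * x + w 2 * y) ^ 2 / w 0) := by
    field_simp
  have e3 : ((s * u 1 + t * w 1) * x + (s * u 2 + t * w 2) * y) ^ 2 / (s * u 0 + t * w 0)
      = (s * (u 1 * x + u 2 * y) + t * (w 1 * x + w 2 * y)) ^ 2 / (s * u 0 + t * w 0) := by
    ring_nf
  rw [e1, e2] at hc
  rw [e3]
  nlinarith [hc]

lemma Qpos (p q r x y : ℝ) (hp : 0 < p) (hd : 0 < p * r - q ^ 2) (hy : y ≠ 0) :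
    0 < p * x ^ 2 + 2 * q * (x * y) + r * y ^ 2 := by
  have h2 : 0 < y ^ 2 := by positivity
  nlinarith [sq_nonneg (p * x + q * y), mul_pos hd h2]

/-- The admissible set of the Ten-Moment equations is a convex cone:
it is closed under positive linear combinations. -/
theorem Uad_convexCone (u w : Fin 6 → ℝ) (hu : u ∈ Uad) (hw : w ∈ Uad)
    (s t : ℝ) (hs : 0 < s) (ht : 0 < t) :
    s • u + t • w ∈ Uad := by
  obtain ⟨hρu, hpu, hdu⟩ := hu
  obtain ⟨hρw, hpw, hdw⟩ := hw
  have hρu' : 0 < u 0 := hρu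
  have hρw' : 0 < w 0 := hρw
  set U := s • u + t • w with hUdef
  have hρU : 0 < rho U := by
    have : rho U = s * u 0 + t * w 0 := by
      simp [rho, hUdef, Pi.add_apply, Pi.smul_apply, smul_eq_mul]
    rw [this]; positivity
  -- p11 positivity via ξ = (1,0)
  have h11 : 0 < p11 U := by
    have hk := key u w hρu' hρw' s t hs ht 1 0
    have hQu : 0 < p11 u := hpu
    have hQw : 0 < p11 w := hpw
    nlinarith [hk, mul_pos hs hQu, mul_pos ht hQw]
  -- determinant positivity via ξ = (p12 U, -p11 U)
  have hdet : 0 < p11 U * p22 U - (p12 U) ^ 2 := by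
    set x := p12 U
    set y := -p11 U
    have hy : y ≠ 0 := by simp only [y]; intro h; nlinarith [h11]
    have hk := key u w hρu' hρw' s t hs ht x y
    have hQu : 0 < p11 u * x ^ 2 + 2 * p12 u * (x * y) + p22 u * y ^ 2 :=
      Qpos _ _ _ _ _ hpu hdu hy
    have hQw : 0 < p11 w * x ^ 2 + 2 * p12 w * (x * y) + p22 w * y ^ 2 :=
      Qpos _ _ _ _ _ hpw hdw hy
    have hQU : 0 < p11 U * x ^ 2 + 2 * p12 U * (x * y) + p22 U * y ^ 2 := by
      nlinarith [hk, mul_pos hs hQu, mul_pos ht hQw]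
    -- Q_U(x,y) = p11 U * (p11 U * p22 U - p12 U ^ 2)
    have hid : p11 U * x ^ 2 + 2 * p12 U * (x * y) + p22 U * y ^ 2
        = p11 U * (p11 U * p22 U - (p12 U) ^ 2) := by
      simp only [x, y]; ring
    rw [hid] at hQU
    exact pos_of_mul_pos_left (by nlinarith [hQU, h11] : 0 < (p11 U * p22 U - (p12 U) ^ 2) * p11 U) h11.le
  exact ⟨hρU, h11, hdet⟩
end
end

section
/- Let u ∈ ℝ⁶ with ρ ≠ 0 and let α ∈ ℝ, α ≠ 0. Set V = u + f(u)/α with components (V₁, …, V₆). Then 2V₁V₄ − V₂² = (p₁₁/α²)·(ρ(v₁ + α)² − p₁₁), where ρ, v₁, p₁₁ are the density, x-velocity and pressure component of u. Analogously, for V = u − f(u)/α one has 2V₁V₄ − V₂² = (p₁₁/α²)·(ρ(v₁ − α)² − p₁₁). -/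
noncomputable section

/-- The x-direction flux of the Ten-Moment system. -/
def fluxX (u : Fin 6 → ℝ) : Fin 6 → ℝ :=
  ![rho u * v1 u,
    rho u * (v1 u) ^ 2 + p11 u,
    rho u * v1 u * v2 u + p12 u,
    (u 3 + p11 u) * v1 u,
    u 4 * v1 u + (p11 u * v2 u + p12 u * v1 u) / 2,
    u 5 * v1 u + p12 u * v2 u]

/-- The maximal wave speed in the x-direction. -/
def alphaX (u : Fin 6 → ℝ) : ℝ := |v1 u| + Real.sqrt (3 * p11 u / rho u)

/-- Algebraic identity for `2V₁V₄ - V₂²` of the split states `V = u ± f(u)/α`. -/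
theorem split_p11_identity (u : Fin 6 → ℝ) (hρ : rho u ≠ 0) (α : ℝ) (hα : α ≠ 0) :
    (2 * (u 0 + fluxX u 0 / α) * (u 3 + fluxX u 3 / α) - (u 1 + fluxX u 1 / α) ^ 2 =
      (p11 u / α ^ 2) * (rho u * (v1 u + α) ^ 2 - p11 u)) ∧
    (2 * (u 0 - fluxX u 0 / α) * (u 3 - fluxX u 3 / α) - (u 1 - fluxX u 1 / α) ^ 2 =
      (p11 u / α ^ 2) * (rho u * (v1 u - α) ^ 2 - p11 u)) := by
  have h0 : u 0 ≠ 0 := hρ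
  constructor <;>
  · simp only [fluxX, rho, v1, p11, Matrix.cons_val_zero, Matrix.cons_val_one, Matrix.head_cons,
      Matrix.cons_val_fin_one, Matrix.cons_val_succ, Matrix.cons_val]
    field_simp
    ring
end
end

section
/- Let u ∈ ℝ⁶ with ρ ≠ 0 and let α ∈ ℝ, α ≠ 0. Set V = u + f(u)/α with components (V₁, …, V₆). Then (2V₁V₄ − V₂²)(2V₁V₆ − V₃²) − (2V₁V₅ − V₂V₃)² = (p₁₁p₂₂ − p₁₂²)·ρ(v₁ + α)²·(ρ(v₁ + α)² − p₁₁)/α⁴, where ρ, v₁, p₁₁, p₁₂, p₂₂ refer to the primitive variables of u. -/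
noncomputable section

/-!
Multiplying the split state by `α` gives `α u + f(u)`, whose entries are affine in `β = v₁ + α`.
For any state `V` the quartic `(2V₁V₄ − V₂²)(2V₁V₆ − V₃²) − (2V₁V₅ − V₂V₃)²` is `V₁²` times the
determinant of its pressure tensor; for `V = α u + f(u)` the three quadratic forms collapse to
`r p − p e₁ (p e₁)ᵀ` with `r = ρβ²`, and the matrix determinant lemma gives
`r (r − p₁₁) det p`. Homogeneity of degree four then accounts for the factor `α⁻⁴`.
-/

-- `det (r • P - P e₁ (P e₁)ᵀ) = r (r - a) det P` for `P = !![a, b; b, c]`.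
lemma det_two_smul_sub_outer_col_zero {R : Type*} [CommRing R] (a b c r : R) :
    (r * a - a * a) * (r * c - b * b) - (r * b - a * b) * (r * b - a * b) =
      r * (r - a) * (a * c - b * b) := by
  ring

/-- For `rho V ≠ 0` this is `rho V ^ 2 * (p11 V * p22 V - p12 V ^ 2)`, written without division. -/
def scaledPressureDet (V : Fin 6 → ℝ) : ℝ :=
  (2 * V 0 * V 3 - V 1 ^ 2) * (2 * V 0 * V 5 - V 2 ^ 2) - (2 * V 0 * V 4 - V 1 * V 2) ^ 2

lemma scaledPressureDet_smul (c : ℝ) (V : Fin 6 → ℝ) :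
    scaledPressureDet (c • V) = c ^ 4 * scaledPressureDet V := by
  simp only [scaledPressureDet, Pi.smul_apply, smul_eq_mul]
  ring

lemma smul_add_fluxX {u : Fin 6 → ℝ} (hρ : rho u ≠ 0) (α : ℝ) :
    α • u + fluxX u =
      ![rho u * (v1 u + α),
        rho u * v1 u * (v1 u + α) + p11 u,
        rho u * v2 u * (v1 u + α) + p12 u,
        (p11 u + rho u * v1 u ^ 2) * (v1 u + α) / 2 + p11 u * v1 u,
        ((p12 u + rho u * v1 u * v2 u) * (v1 u + α) + p11 u * v2 u + p12 u * v1 u) / 2,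
        (p22 u + rho u * v2 u ^ 2) * (v1 u + α) / 2 + p12 u * v2 u] := by
  have h0 : u 0 ≠ 0 := hρ
  ext i
  fin_cases i <;>
    simp only [Fin.zero_eta, Fin.mk_one, Fin.reduceFinMk, Pi.add_apply, Pi.smul_apply, smul_eq_mul,
      fluxX, rho, v1, v2, p11, p12, p22, Matrix.cons_val] <;>
    field_simp <;> ring

lemma scaledPressureDet_smul_add_fluxX {u : Fin 6 → ℝ} (hρ : rho u ≠ 0) (α : ℝ) :
    scaledPressureDet (α • u + fluxX u) =
      rho u * (v1 u + α) ^ 2 * (rho u * (v1 u + α) ^ 2 - p11 u) *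
        (p11 u * p22 u - p12 u ^ 2) := by
  set r := rho u * (v1 u + α) ^ 2
  have h₁₁ : 2 * (α • u + fluxX u) 0 * (α • u + fluxX u) 3 - (α • u + fluxX u) 1 ^ 2 =
      r * p11 u - p11 u * p11 u := by
    rw [smul_add_fluxX hρ]; simp only [Matrix.cons_val]; ring
  have h₁₂ : 2 * (α • u + fluxX u) 0 * (α • u + fluxX u) 4 -
      (α • u + fluxX u) 1 * (α • u + fluxX u) 2 = r * p12 u - p11 u * p12 u := by
    rw [smul_add_fluxX hρ]; simp only [Matrix.cons_val]; ring
  have h₂₂ : 2 * (α • u + fluxX u) 0 * (α • u + fluxX u) 5 - (α • u + fluxX u) 2 ^ 2 =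
      r * p22 u - p12 u * p12 u := by
    rw [smul_add_fluxX hρ]; simp only [Matrix.cons_val]; ring
  rw [scaledPressureDet, h₁₁, h₁₂, h₂₂, sq, det_two_smul_sub_outer_col_zero, sq]

/-- Algebraic identity for the pressure determinant of the split state `V = u + f(u)/α`. -/
theorem split_det_identity (u : Fin 6 → ℝ) (hρ : rho u ≠ 0) (α : ℝ) (hα : α ≠ 0) :
    (2 * (u 0 + fluxX u 0 / α) * (u 3 + fluxX u 3 / α) - (u 1 + fluxX u 1 / α) ^ 2) *
        (2 * (u 0 + fluxX u 0 / α) * (u 5 + fluxX u 5 / α) - (u 2 + fluxX u 2 / α) ^ 2) -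
      (2 * (u 0 + fluxX u 0 / α) * (u 4 + fluxX u 4 / α) -
        (u 1 + fluxX u 1 / α) * (u 2 + fluxX u 2 / α)) ^ 2 =
    (p11 u * p22 u - (p12 u) ^ 2) * rho u * (v1 u + α) ^ 2 *
      (rho u * (v1 u + α) ^ 2 - p11 u) / α ^ 4 := by
  have h_split : u + α⁻¹ • fluxX u = α⁻¹ • (α • u + fluxX u) := by
    rw [smul_add, smul_smul, inv_mul_cancel₀ hα, one_smul]
  calc _ = scaledPressureDet (u + α⁻¹ • fluxX u) := by
        simp only [scaledPressureDet, Pi.add_apply, Pi.smul_apply, smul_eq_mul, div_eq_inv_mul]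
    _ = α⁻¹ ^ 4 * scaledPressureDet (α • u + fluxX u) := by
        rw [h_split, scaledPressureDet_smul]
    _ = _ := by
        rw [scaledPressureDet_smul_add_fluxX hρ]
        ring
end
end

section
/- If u ∈ U_ad, then both split states w⁺(u) = ½(u + f(u)/αˣ(u)) and w⁻(u) = ½(u − f(u)/αˣ(u)) belong to U_ad, where αˣ(u) = |v₁| + √(3p₁₁/ρ) is the maximal x-direction wave speed of u. -/
noncomputable section

/-! In primitive variables the split state `½(u + s f(u))` has density `ρ(1 + s v₁)/2`, while
`p₁₁` and `det p` are rescaled by `g/(2(1 + s v₁))` and `g/4`, where `g = (1 + s v₁)² − s² p₁₁/ρ`.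
All three stay positive as soon as `|s| (|v₁| + √(p₁₁/ρ)) < 1`, and `s = ±1/αˣ(u)` satisfies
this because `√(p₁₁/ρ) < √(3p₁₁/ρ)`. -/

def splitState (s : ℝ) (u : Fin 6 → ℝ) : Fin 6 → ℝ := (2 : ℝ)⁻¹ • (u + s • fluxX u)

lemma splitState_apply (s : ℝ) (u : Fin 6 → ℝ) (i : Fin 6) :
    splitState s u i = (u i + s * fluxX u i) / 2 := by
  simp only [splitState, Pi.smul_apply, Pi.add_apply, smul_eq_mul]; ring

lemma rho_mul_one_add_mul_v1 (s : ℝ) {u : Fin 6 → ℝ} (hρ : rho u ≠ 0) :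
    rho u * (1 + s * v1 u) = u 0 + s * u 1 := by
  simp only [rho, v1] at *; field_simp

lemma rho_splitState (s : ℝ) {u : Fin 6 → ℝ} (hρ : rho u ≠ 0) :
    rho (splitState s u) = rho u * (1 + s * v1 u) / 2 := by
  rw [rho_mul_one_add_mul_v1 s hρ]
  simp only [rho, v1, splitState_apply, fluxX, Matrix.cons_val_zero] at *
  field_simp

lemma p11_splitState (s : ℝ) {u : Fin 6 → ℝ} (hρ : rho u ≠ 0) (hA : 1 + s * v1 u ≠ 0) :
    p11 (splitState s u) =
      p11 u * ((1 + s * v1 u) ^ 2 - s ^ 2 * (p11 u / rho u)) / (2 * (1 + s * v1 u)) := by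
  have hA' : u 0 + s * u 1 ≠ 0 := rho_mul_one_add_mul_v1 s hρ ▸ mul_ne_zero hρ hA
  simp only [p11, rho, v1, v2, p12, splitState_apply, fluxX, Matrix.cons_val,
    Matrix.cons_val_one, Matrix.cons_val_zero] at *
  field_simp
  ring

lemma det_splitState (s : ℝ) {u : Fin 6 → ℝ} (hρ : rho u ≠ 0) (hA : 1 + s * v1 u ≠ 0) :
    p11 (splitState s u) * p22 (splitState s u) - p12 (splitState s u) ^ 2 =
      ((1 + s * v1 u) ^ 2 - s ^ 2 * (p11 u / rho u)) * (p11 u * p22 u - p12 u ^ 2) / 4 := by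
  have hA' : u 0 + s * u 1 ≠ 0 := rho_mul_one_add_mul_v1 s hρ ▸ mul_ne_zero hρ hA
  simp only [p11, rho, v1, v2, p12, p22, splitState_apply, fluxX, Matrix.cons_val,
    Matrix.cons_val_one, Matrix.cons_val_zero] at *
  field_simp
  ring

lemma splitState_mem_Uad {s : ℝ} {u : Fin 6 → ℝ} (hu : u ∈ Uad)
    (hs : |s| * (|v1 u| + √(p11 u / rho u)) < 1) : splitState s u ∈ Uad := by
  obtain ⟨hρ, hp, hdet⟩ := hu
  have hc : √(p11 u / rho u) ^ 2 = p11 u / rho u := Real.sq_sqrt (div_pos hp hρ).le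
  have hsv : -(|s| * |v1 u|) ≤ s * v1 u := by rw [← abs_mul]; exact neg_abs_le _
  have hlt : |s| * √(p11 u / rho u) < 1 + s * v1 u := by linarith
  have hA : 0 < 1 + s * v1 u := lt_of_le_of_lt (by positivity) hlt
  have hgap : 0 < (1 + s * v1 u) ^ 2 - s ^ 2 * (p11 u / rho u) := by
    have hsq := pow_lt_pow_left₀ hlt (by positivity) two_ne_zero
    rw [mul_pow, sq_abs, hc] at hsq
    linarith
  refine ⟨?_, ?_, ?_⟩
  · rw [rho_splitState s hρ.ne']; positivity
  · rw [p11_splitState s hρ.ne' hA.ne']; positivity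
  · rw [det_splitState s hρ.ne' hA.ne']; positivity

lemma abs_v1_add_sqrt_lt_alphaX {u : Fin 6 → ℝ} (hu : u ∈ Uad) :
    |v1 u| + √(p11 u / rho u) < alphaX u := by
  have hpos : 0 < p11 u / rho u := div_pos hu.2.1 hu.1
  have hsqrt : √(p11 u / rho u) < √(3 * p11 u / rho u) := by
    rw [mul_div_assoc]; exact Real.sqrt_lt_sqrt hpos.le (by linarith)
  rw [alphaX]; linarith

/-- The Lax-Friedrichs split states `w±(u) = ½(u ± f(u)/αˣ(u))` of an admissible
state are admissible. -/
theorem split_states_admissible (u : Fin 6 → ℝ) (hu : u ∈ Uad) :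
    (2 : ℝ)⁻¹ • (u + (alphaX u)⁻¹ • fluxX u) ∈ Uad ∧
    (2 : ℝ)⁻¹ • (u - (alphaX u)⁻¹ • fluxX u) ∈ Uad := by
  have hlt := abs_v1_add_sqrt_lt_alphaX hu
  have hα : 0 < alphaX u := lt_of_le_of_lt (by positivity) hlt
  have hs : |(alphaX u)⁻¹| * (|v1 u| + √(p11 u / rho u)) < 1 := by
    rw [abs_of_pos (inv_pos.mpr hα), inv_mul_lt_one₀ hα]; exact hlt
  refine ⟨splitState_mem_Uad hu hs, ?_⟩
  rw [sub_eq_add_neg, ← neg_smul]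
  exact splitState_mem_Uad hu (by rwa [abs_neg])
end
end

section
/- Let â, b̂ ∈ ℝ and let u ∈ ℝ⁶ have density ρ ≠ 0. Set u' = Exp(â,b̂)·u. Then the primitive variables transform as: ρ(u') = ρ(u), v₁(u') = v₁(u) + â, v₂(u') = v₂(u) + b̂, p₁₁(u') = p₁₁(u), p₁₂(u') = p₁₂(u), p₂₂(u') = p₂₂(u). In particular, for every â, b̂ ∈ ℝ the map u ↦ Exp(â,b̂)·u sends U_ad into U_ad (the exact source-ODE update is unconditionally positivity preserving, both forward and backward in time). -/
noncomputable section

/-- The explicit exponential matrix of the source operator. -/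
def ExpM (a b : ℝ) : Matrix (Fin 6) (Fin 6) ℝ :=
  !![1, 0, 0, 0, 0, 0;
     a, 1, 0, 0, 0, 0;
     b, 0, 1, 0, 0, 0;
     a ^ 2 / 2, a, 0, 1, 0, 0;
     a * b / 2, b / 2, a / 2, 0, 1, 0;
     b ^ 2 / 2, 0, b, 0, 0, 1]

/-! `Exp(â,b̂)` is the Galilean boost by `v̂ = (â, b̂)`: it keeps `ρ`, adds `ρ v̂` to the
momentum, and adds to the energy tensor exactly what keeps `2E − m ⊗ m / ρ` fixed. So the
pressure tensor is boost invariant, and admissibility, which only involves `ρ` and the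
pressure tensor, is preserved by every boost. -/

lemma expM_mulVec (a b : ℝ) (u : Fin 6 → ℝ) :
    (ExpM a b).mulVec u =
      ![u 0, a * u 0 + u 1, b * u 0 + u 2, a ^ 2 / 2 * u 0 + a * u 1 + u 3,
        a * b / 2 * u 0 + b / 2 * u 1 + a / 2 * u 2 + u 4, b ^ 2 / 2 * u 0 + b * u 2 + u 5] := by
  ext i
  fin_cases i <;> simp [ExpM, Matrix.mulVec, dotProduct, Fin.sum_univ_six, add_assoc]

lemma rho_expM_mulVec (a b : ℝ) (u : Fin 6 → ℝ) : rho ((ExpM a b).mulVec u) = rho u := by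
  simp [rho, expM_mulVec]

lemma v1_expM_mulVec (a b : ℝ) {u : Fin 6 → ℝ} (hρ : rho u ≠ 0) :
    v1 ((ExpM a b).mulVec u) = v1 u + a := by
  rw [rho] at hρ
  simp only [v1, expM_mulVec, Matrix.cons_val_one, Matrix.cons_val_zero]
  field_simp
  ring

lemma v2_expM_mulVec (a b : ℝ) {u : Fin 6 → ℝ} (hρ : rho u ≠ 0) :
    v2 ((ExpM a b).mulVec u) = v2 u + b := by
  rw [rho] at hρ
  simp only [v2, expM_mulVec, Matrix.cons_val, Matrix.cons_val_zero]
  field_simp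
  ring

lemma p11_expM_mulVec (a b : ℝ) {u : Fin 6 → ℝ} (hρ : rho u ≠ 0) :
    p11 ((ExpM a b).mulVec u) = p11 u := by
  rw [rho] at hρ
  simp only [p11, expM_mulVec, Matrix.cons_val, Matrix.cons_val_one, Matrix.cons_val_zero]
  field_simp
  ring

lemma p12_expM_mulVec (a b : ℝ) {u : Fin 6 → ℝ} (hρ : rho u ≠ 0) :
    p12 ((ExpM a b).mulVec u) = p12 u := by
  rw [rho] at hρ
  simp only [p12, expM_mulVec, Matrix.cons_val, Matrix.cons_val_one, Matrix.cons_val_zero]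
  field_simp
  ring

lemma p22_expM_mulVec (a b : ℝ) {u : Fin 6 → ℝ} (hρ : rho u ≠ 0) :
    p22 ((ExpM a b).mulVec u) = p22 u := by
  rw [rho] at hρ
  simp only [p22, expM_mulVec, Matrix.cons_val, Matrix.cons_val_zero]
  field_simp
  ring

lemma expM_mulVec_mem_Uad (a b : ℝ) {u : Fin 6 → ℝ} (hu : u ∈ Uad) :
    (ExpM a b).mulVec u ∈ Uad := by
  have hρ : rho u ≠ 0 := hu.1.ne'
  simpa only [Uad, Set.mem_ofPred_eq, rho_expM_mulVec, p11_expM_mulVec a b hρ,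
    p12_expM_mulVec a b hρ, p22_expM_mulVec a b hρ] using hu

/-- The exact source-ODE update `u ↦ Exp(â,b̂)·u` shifts the velocities and leaves
density and pressure tensor unchanged; in particular it preserves admissibility. -/
theorem expM_primitive_transform (a b : ℝ) (u : Fin 6 → ℝ) (hρ : rho u ≠ 0) :
    (rho ((ExpM a b).mulVec u) = rho u ∧
     v1 ((ExpM a b).mulVec u) = v1 u + a ∧
     v2 ((ExpM a b).mulVec u) = v2 u + b ∧
     p11 ((ExpM a b).mulVec u) = p11 u ∧
     p12 ((ExpM a b).mulVec u) = p12 u ∧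
     p22 ((ExpM a b).mulVec u) = p22 u) ∧
    (∀ a' b' : ℝ, ∀ w ∈ Uad, (ExpM a' b').mulVec w ∈ Uad) :=
  ⟨⟨rho_expM_mulVec a b u, v1_expM_mulVec a b hρ, v2_expM_mulVec a b hρ,
      p11_expM_mulVec a b hρ, p12_expM_mulVec a b hρ, p22_expM_mulVec a b hρ⟩,
    fun a' b' _ hw => expM_mulVec_mem_Uad a' b' hw⟩
end
end

section
/- (Positivity of the 1-D finite difference scheme.) Let ŵ ∈ (0,1) and λ > 0. Let (u_i)_{i∈ℤ} be states in U_ad, and for each i ∈ ℤ let α_{i+½} > 0 and w⁺_{i+½}, w⁻_{i+½} ∈ U_ad be given. Define w_i^± = ½(u_i ± f(u_i)/αˣ(u_i)), q_i^{+,*} = (w_i^+ − ŵ·w⁺_{i+½})/(1−ŵ), and q_i^{−,*} = (w_i^− − ŵ·w⁻_{i−½})/(1−ŵ). Assume that for all i: q_i^{+,*} ∈ U_ad, q_i^{−,*} ∈ U_ad, and λ·α_{i+½} ≤ ŵ. Then for every i the forward Euler update u_i − λ(F_{i+½} − F_{i−½}) belongs to U_ad, where F_{i+½} = α_{i+½}(w⁺_{i+½}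 − w⁻_{i+½}). -/
noncomputable section

/-- The positive Lax-Friedrichs split part of a state. -/
def wP (u : Fin 6 → ℝ) : Fin 6 → ℝ := (2 : ℝ)⁻¹ • (u + (alphaX u)⁻¹ • fluxX u)

/-- The negative Lax-Friedrichs split part of a state. -/
def wM (u : Fin 6 → ℝ) : Fin 6 → ℝ := (2 : ℝ)⁻¹ • (u - (alphaX u)⁻¹ • fluxX u)

lemma det_add (a b c a' b' c' : ℝ) (ha : 0 < a) (hd : 0 < a * c - b ^ 2)
    (ha' : 0 ≤ a') (hc' : 0 ≤ c') (hd' : 0 ≤ a' * c' - b' ^ 2) :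
    0 < (a + a') * (c + c') - (b + b') ^ 2 := by
  have hc : 0 < c := by nlinarith [sq_nonneg b]
  rcases ha'.eq_or_lt with h | h
  · have hb' : b' = 0 := by nlinarith [sq_nonneg b']
    rw [← h, hb']
    nlinarith [mul_nonneg ha.le hc']
  · nlinarith [mul_pos (mul_pos ha h) hd, sq_nonneg (a * b' - a' * b),
      mul_nonneg (mul_nonneg ha.le ha.le) hd', mul_nonneg (mul_nonneg h.le h.le) hd.le,
      mul_pos ha h]

lemma Uad_smul {u : Fin 6 → ℝ} {c : ℝ} (hc : 0 < c) (hu : u ∈ Uad) : c • u ∈ Uad := by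
  obtain ⟨hρ, h1, h2⟩ := hu
  have h0 : u 0 ≠ 0 := ne_of_gt hρ
  have e1 : p11 (c • u) = c * p11 u := by
    simp only [p11, Pi.smul_apply, smul_eq_mul]; field_simp
  have e2 : p12 (c • u) = c * p12 u := by
    simp only [p12, Pi.smul_apply, smul_eq_mul]; field_simp
  have e3 : p22 (c • u) = c * p22 u := by
    simp only [p22, Pi.smul_apply, smul_eq_mul]; field_simp
  refine ⟨?_, ?_, ?_⟩
  · simpa [rho] using mul_pos hc hρ
  · rw [e1]; exact mul_pos hc h1
  · rw [e1, e2, e3]; nlinarith [mul_pos hc hc]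

lemma Uad_add {u v : Fin 6 → ℝ} (hu : u ∈ Uad) (hv : v ∈ Uad) : u + v ∈ Uad := by
  obtain ⟨hρu, h1u, h2u⟩ := hu
  obtain ⟨hρv, h1v, h2v⟩ := hv
  have hρu' : (0:ℝ) < u 0 := hρu
  have hρv' : (0:ℝ) < v 0 := hρv
  have h0u : u 0 ≠ 0 := ne_of_gt hρu'
  have h0v : v 0 ≠ 0 := ne_of_gt hρv'
  have hs : (0:ℝ) < u 0 + v 0 := by linarith
  have h0s : u 0 + v 0 ≠ 0 := ne_of_gt hs
  set D : ℝ := u 0 * v 0 * (u 0 + v 0) with hD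
  have hDpos : 0 < D := by positivity
  set e1 : ℝ := u 1 * v 0 - v 1 * u 0
  set e2 : ℝ := u 2 * v 0 - v 2 * u 0
  have E1 : p11 (u + v) = (p11 u + p11 v) + e1 ^ 2 / D := by
    simp only [p11, Pi.add_apply, hD, e1]; field_simp; ring
  have E2 : p12 (u + v) = (p12 u + p12 v) + e1 * e2 / D := by
    simp only [p12, Pi.add_apply, hD, e1, e2]; field_simp; ring
  have E3 : p22 (u + v) = (p22 u + p22 v) + e2 ^ 2 / D := by
    simp only [p22, Pi.add_apply, hD, e2]; field_simp; ring
  have hA : 0 < (p11 u + p11 v) * (p22 u + p22 v) - (p12 u + p12 v) ^ 2 := by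
    have h22v : 0 < p22 v := by nlinarith [sq_nonneg (p12 v)]
    exact det_add _ _ _ _ _ _ h1u h2u h1v.le h22v.le h2v.le
  refine ⟨?_, ?_, ?_⟩
  · exact hs
  · rw [E1]; positivity
  · rw [E1, E2, E3]
    have hq11 : 0 ≤ e1 ^ 2 / D := by positivity
    have hq22 : 0 ≤ e2 ^ 2 / D := by positivity
    have hqdet : 0 ≤ (e1 ^ 2 / D) * (e2 ^ 2 / D) - (e1 * e2 / D) ^ 2 := by
      have : (e1 ^ 2 / D) * (e2 ^ 2 / D) - (e1 * e2 / D) ^ 2 = 0 := by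
        field_simp; ring
      linarith
    have h11 : 0 < p11 u + p11 v := by linarith
    exact det_add _ _ _ _ _ _ h11 hA hq11 hq22 hqdet

lemma Uad_add_smul_nonneg {u w : Fin 6 → ℝ} (hu : u ∈ Uad) {c : ℝ} (hc : 0 ≤ c)
    (hw : w ∈ Uad) : u + c • w ∈ Uad := by
  rcases hc.eq_or_lt with h | h
  · simpa [← h] using hu
  · exact Uad_add hu (Uad_smul h hw)

/-- Positivity of the 1-D finite difference scheme: under the CFL condition
`λ α_{i+½} ≤ ŵ` and admissibility of the face states and the `q*` states, the
forward Euler update `uᵢ - λ (F_{i+½} - F_{i-½})` with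
`F_{i+½} = α_{i+½} (w⁺_{i+½} - w⁻_{i+½})` is admissible. Face `i+½` is indexed by `i`. -/
theorem fd1d_forwardEuler_positivity (what lam : ℝ)
    (hwhat : what ∈ Set.Ioo (0 : ℝ) 1) (hlam : 0 < lam)
    (u : ℤ → Fin 6 → ℝ) (hu : ∀ i, u i ∈ Uad)
    (af : ℤ → ℝ) (haf : ∀ i, 0 < af i)
    (wp wm : ℤ → Fin 6 → ℝ)
    (hwp : ∀ i, wp i ∈ Uad) (hwm : ∀ i, wm i ∈ Uad)
    (hqp : ∀ i, (1 - what)⁻¹ • (wP (u i) - what • wp i) ∈ Uad)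
    (hqm : ∀ i, (1 - what)⁻¹ • (wM (u i) - what • wm (i - 1)) ∈ Uad)
    (hcfl : ∀ i, lam * af i ≤ what) :
    ∀ i, u i - lam • (af i • (wp i - wm i) - af (i - 1) • (wp (i - 1) - wm (i - 1))) ∈ Uad := by
  intro i
  have h1 : (0 : ℝ) < 1 - what := by linarith [hwhat.2]
  have hne : (1 : ℝ) - what ≠ 0 := ne_of_gt h1
  have hθi : 0 < lam * af i := mul_pos hlam (haf i)
  have hθj : 0 < lam * af (i - 1) := mul_pos hlam (haf (i - 1))
  have hsum : u i - lam • (af i • (wp i - wm i) - af (i - 1) • (wp (i - 1) - wm (i - 1)))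
      = ((((((1 - what) • ((1 - what)⁻¹ • (wP (u i) - what • wp i))
        + (what - lam * af i) • wp i)
        + (lam * af i) • wm i)
        + (1 - what) • ((1 - what)⁻¹ • (wM (u i) - what • wm (i - 1))))
        + (what - lam * af (i - 1)) • wm (i - 1))
        + (lam * af (i - 1)) • wp (i - 1)) := by
    rw [smul_inv_smul₀ hne, smul_inv_smul₀ hne]
    have hPM : wP (u i) + wM (u i) = u i := by
      funext x
      simp only [wP, wM, Pi.smul_apply, Pi.add_apply, Pi.sub_apply, smul_eq_mul]
      ring
    funext x
    have hPMx := congrFun hPM x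
    simp only [Pi.smul_apply, Pi.add_apply, Pi.sub_apply, smul_eq_mul] at hPMx ⊢
    linear_combination -hPMx
  rw [hsum]
  have m1 := Uad_smul h1 (hqp i)
  have m2 := Uad_add_smul_nonneg m1 (show (0:ℝ) ≤ what - lam * af i by linarith [hcfl i]) (hwp i)
  have m3 := Uad_add m2 (Uad_smul hθi (hwm i))
  have m4 := Uad_add m3 (Uad_smul h1 (hqm i))
  have m5 := Uad_add_smul_nonneg m4
    (show (0:ℝ) ≤ what - lam * af (i - 1) by linarith [hcfl (i - 1)]) (hwm (i - 1))
  exact Uad_add m5 (Uad_smul hθj (hwp (i - 1)))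
end
end

section
/- (Hyperbolicity of the Ten-Moment system in the x-direction.) Let u ∈ U_ad and let A ∈ M₆(ℝ) be the Jacobian matrix at u of the x-flux map f written in conserved variables (the matrix of the Fréchet derivative of f at u with respect to the standard basis). Then the characteristic polynomial of A equals (X − v₁)²·(X − v₁ − √(3p₁₁/ρ))·(X − v₁ + √(3p₁₁/ρ))·(X − v₁ − √(p₁₁/ρ))·(X − v₁ + √(p₁₁/ρ)). In particular, A has six real eigenvalues: v₁ (with multiplicity two), v₁ ± √(3p₁₁/ρ), and v₁ ± √(p₁₁/ρ). -/
/-!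
Order the conserved variables as `(ρ, m₁, E₁₁ | m₂, E₁₂, E₂₂)`. The x-fluxes of `ρ, m₁, E₁₁`
depend only on `ρ, m₁, E₁₁`, so the flux Jacobian becomes block lower triangular and its
characteristic polynomial is the product of those of two `3 × 3` blocks: the first, a
one-dimensional gas-dynamics block with adiabatic exponent 3, gives
`(X - v₁)((X - v₁)² - 3p₁₁/ρ)`, and the second gives `(X - v₁)((X - v₁)² - p₁₁/ρ)`.
Since `p₁₁/ρ > 0` on the admissible set, both quadratics split over `ℝ`.
-/

noncomputable section

/-- The x-flux map written in conserved variables. -/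
def fluxC (u : Fin 6 → ℝ) : Fin 6 → ℝ :=
  ![u 1,
    (u 1) ^ 2 / u 0 + p11 u,
    u 1 * u 2 / u 0 + p12 u,
    (u 3 + p11 u) * u 1 / u 0,
    u 4 * u 1 / u 0 + (p11 u * u 2 + p12 u * u 1) / (2 * u 0),
    u 5 * u 1 / u 0 + p12 u * u 2 / u 0]

theorem Matrix.eq_of_hasFDerivAt_mulVecLin {𝕜 m n : Type*} [NontriviallyNormedField 𝕜]
    [CompleteSpace 𝕜] [Fintype m] [Fintype n] [DecidableEq n] {f : (n → 𝕜) → m → 𝕜}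
    {x : n → 𝕜} {A B : Matrix m n 𝕜}
    (hA : HasFDerivAt f (LinearMap.toContinuousLinearMap A.mulVecLin) x)
    (hB : HasFDerivAt f (LinearMap.toContinuousLinearMap B.mulVecLin) x) : A = B :=
  Matrix.toLin'.injective (LinearMap.toContinuousLinearMap.injective (hA.unique hB))

theorem Matrix.charpoly_eq_mul_of_toBlocks₁₂_eq_zero {R m n : Type*} [CommRing R]
    [Fintype m] [Fintype n] [DecidableEq m] [DecidableEq n] (M : Matrix (m ⊕ n) (m ⊕ n) R)
    (h : M.toBlocks₁₂ = 0) : M.charpoly = M.toBlocks₁₁.charpoly * M.toBlocks₂₂.charpoly := by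
  rw [← M.fromBlocks_toBlocks, h, Matrix.charpoly_fromBlocks_zero₁₂]
  simp

open Polynomial

theorem Polynomial.X_sub_C_sq_sub_C_eq_mul {a : ℝ} (ha : 0 ≤ a) (b : ℝ) :
    (X - C b) ^ 2 - C a = (X - C (b + √a)) * (X - C (b - √a)) := by
  have h : C a = C √a ^ 2 := by rw [← C_pow, Real.sq_sqrt ha]
  rw [h, C_add, C_sub]
  ring

def fluxJacobian (u : Fin 6 → ℝ) : Matrix (Fin 6) (Fin 6) ℝ :=
  !![0, 1, 0, 0, 0, 0;
    0, 0, 0, 2, 0, 0;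
    0, 0, 0, 0, 2, 0;
    2 * u 1 ^ 3 / u 0 ^ 3 - 3 * u 3 * u 1 / u 0 ^ 2,
      3 * u 3 / u 0 - 3 * u 1 ^ 2 / u 0 ^ 2, 0, 3 * u 1 / u 0, 0, 0;
    2 * u 1 ^ 2 * u 2 / u 0 ^ 3 - 2 * u 4 * u 1 / u 0 ^ 2 - u 3 * u 2 / u 0 ^ 2,
      2 * u 4 / u 0 - 2 * u 1 * u 2 / u 0 ^ 2, u 3 / u 0 - u 1 ^ 2 / u 0 ^ 2,
      u 2 / u 0, 2 * u 1 / u 0, 0;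
    2 * u 1 * u 2 ^ 2 / u 0 ^ 3 - u 5 * u 1 / u 0 ^ 2 - 2 * u 4 * u 2 / u 0 ^ 2,
      u 5 / u 0 - u 2 ^ 2 / u 0 ^ 2, 2 * u 4 / u 0 - 2 * u 1 * u 2 / u 0 ^ 2,
      0, 2 * u 2 / u 0, u 1 / u 0]

lemma hasFDerivAt_fluxC {u : Fin 6 → ℝ} (h0 : u 0 ≠ 0) :
    HasFDerivAt fluxC (LinearMap.toContinuousLinearMap (fluxJacobian u).mulVecLin) u := by
  have hc (j : Fin 6) := hasFDerivAt_apply (𝕜 := ℝ) j u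
  have hinv := (hasFDerivAt_inv h0).comp u (hc 0)
  have hp11 := ((hc 3).const_mul 2).sub (((hc 1).mul (hc 1)).mul hinv)
  have hp12 := ((hc 4).const_mul 2).sub (((hc 1).mul (hc 2)).mul hinv)
  rw [hasFDerivAt_pi']
  intro i
  fin_cases i <;> [
    refine (hc 1).congr_fderiv ?_;
    refine ((((hc 1).mul (hc 1)).mul hinv).add hp11).congr_fderiv ?_ |>.congr_of_eventuallyEq
      (.of_forall fun v => ?_);
    refine ((((hc 1).mul (hc 2)).mul hinv).add hp12).congr_fderiv ?_ |>.congr_of_eventuallyEq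
      (.of_forall fun v => ?_);
    refine ((((hc 3).add hp11).mul (hc 1)).mul hinv).congr_fderiv ?_ |>.congr_of_eventuallyEq
      (.of_forall fun v => ?_);
    refine ((((hc 4).mul (hc 1)).mul hinv).add
      ((((hp11.mul (hc 2)).add (hp12.mul (hc 1))).mul hinv).const_mul 2⁻¹)).congr_fderiv ?_
      |>.congr_of_eventuallyEq (.of_forall fun v => ?_);
    refine ((((hc 5).mul (hc 1)).mul hinv).add ((hp12.mul (hc 2)).mul hinv)).congr_fderiv ?_
      |>.congr_of_eventuallyEq (.of_forall fun v => ?_)]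
  all_goals try ext w
  all_goals simp [fluxJacobian, dotProduct, Fin.sum_univ_six, fluxC, p11, p12]
  all_goals ring

def fluxBlockEquiv : Fin 3 ⊕ Fin 3 ≃ Fin 6 where
  toFun := Sum.elim ![0, 1, 3] ![2, 4, 5]
  invFun := ![.inl 0, .inl 1, .inr 0, .inl 2, .inr 1, .inr 2]
  left_inv := by decide
  right_inv := by decide

lemma fluxJacobian_toBlocks₁₂ (u : Fin 6 → ℝ) :
    ((fluxJacobian u).submatrix fluxBlockEquiv fluxBlockEquiv).toBlocks₁₂ = 0 := by
  ext i j
  fin_cases i <;> fin_cases j <;>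
    simp [fluxBlockEquiv, fluxJacobian, Matrix.toBlocks₁₂, Matrix.submatrix_apply]

lemma fluxJacobian_toBlocks₁₁_charpoly {u : Fin 6 → ℝ} (h0 : u 0 ≠ 0) :
    ((fluxJacobian u).submatrix fluxBlockEquiv fluxBlockEquiv).toBlocks₁₁.charpoly =
      (X - C (v1 u)) * ((X - C (v1 u)) ^ 2 - C (3 * p11 u / rho u)) := by
  refine Polynomial.funext fun x => ?_
  rw [Matrix.eval_charpoly, Matrix.det_fin_three]
  simp [fluxBlockEquiv, fluxJacobian, Matrix.toBlocks₁₁, Matrix.submatrix_apply, v1, p11, rho]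
  field_simp
  ring

lemma fluxJacobian_toBlocks₂₂_charpoly {u : Fin 6 → ℝ} (h0 : u 0 ≠ 0) :
    ((fluxJacobian u).submatrix fluxBlockEquiv fluxBlockEquiv).toBlocks₂₂.charpoly =
      (X - C (v1 u)) * ((X - C (v1 u)) ^ 2 - C (p11 u / rho u)) := by
  refine Polynomial.funext fun x => ?_
  rw [Matrix.eval_charpoly, Matrix.det_fin_three]
  simp [fluxBlockEquiv, fluxJacobian, Matrix.toBlocks₂₂, Matrix.submatrix_apply, v1, p11, rho]
  field_simp
  ring

lemma fluxJacobian_charpoly_eq_mul {u : Fin 6 → ℝ} (h0 : u 0 ≠ 0) :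
    (fluxJacobian u).charpoly =
      (X - C (v1 u)) * ((X - C (v1 u)) ^ 2 - C (3 * p11 u / rho u)) *
        ((X - C (v1 u)) * ((X - C (v1 u)) ^ 2 - C (p11 u / rho u))) := by
  rw [← Matrix.charpoly_reindex fluxBlockEquiv.symm, Matrix.reindex_apply, Equiv.symm_symm,
    Matrix.charpoly_eq_mul_of_toBlocks₁₂_eq_zero _ (fluxJacobian_toBlocks₁₂ u),
    fluxJacobian_toBlocks₁₁_charpoly h0, fluxJacobian_toBlocks₂₂_charpoly h0]

open Polynomial in
/-- Hyperbolicity of the Ten-Moment system in the x-direction: the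
characteristic polynomial of the flux Jacobian at an admissible state factors
into linear factors with the real roots `v₁` (twice), `v₁ ± √(3p₁₁/ρ)` and
`v₁ ± √(p₁₁/ρ)`. -/
theorem fluxJacobian_charpoly (u : Fin 6 → ℝ) (hu : u ∈ Uad)
    (A : Matrix (Fin 6) (Fin 6) ℝ)
    (hA : HasFDerivAt fluxC (LinearMap.toContinuousLinearMap A.mulVecLin) u) :
    A.charpoly =
      (X - C (v1 u)) ^ 2 *
      (X - C (v1 u + Real.sqrt (3 * p11 u / rho u))) *
      (X - C (v1 u - Real.sqrt (3 * p11 u / rho u))) *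
      (X - C (v1 u + Real.sqrt (p11 u / rho u))) *
      (X - C (v1 u - Real.sqrt (p11 u / rho u))) := by
  obtain ⟨hρ, hp, -⟩ := hu
  have h0 : u 0 ≠ 0 := hρ.ne'
  obtain rfl : A = fluxJacobian u :=
    Matrix.eq_of_hasFDerivAt_mulVecLin hA (hasFDerivAt_fluxC h0)
  rw [fluxJacobian_charpoly_eq_mul h0, X_sub_C_sq_sub_C_eq_mul (by positivity),
    X_sub_C_sq_sub_C_eq_mul (by positivity)]
  ring
end
end

section
/- Let the potential be W(x) = x (so ∂ₓW ≡ 1). Define on ℝ² the primitive fields ρ(x,t) = 2 + sin(2π(x − t)), v₁ ≡ 1, v₂ ≡ 0, p₁₁(x,t) = 5 + t − x + cos(2π(x − t))/(4π), p₁₂ ≡ 0, p₂₂ ≡ 1, and let u(x,t) ∈ ℝ⁶ be the corresponding conserved state. Then u is a classical solution of the 1-D Ten-Moment system with source: ∂ₜu(x,t) + ∂ₓ f(u(x,t)) = s(u(x,t)) for all (x,t) ∈ ℝ². -/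
noncomputable section

/-- The conserved state corresponding to given primitive variables. -/
def consState (r w1 w2 q11 q12 q22 : ℝ) : Fin 6 → ℝ :=
  ![r, r * w1, r * w2, (q11 + r * w1 ^ 2) / 2, (q12 + r * w1 * w2) / 2, (q22 + r * w2 ^ 2) / 2]

/-- The 1-D body-force source term for a given value `d = ∂ₓW` of the potential
gradient. -/
def src (d : ℝ) (u : Fin 6 → ℝ) : Fin 6 → ℝ :=
  ![0, -(rho u * d) / 2, 0, -(rho u * v1 u * d) / 2, -(rho u * v2 u * d) / 4, 0]

/-! For `v = (1, 0)`, `p₁₂ = 0`, `p₂₂ = 1` only the density `ρ` and the pressure `q = p₁₁` vary,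
and the six balance laws with source `∂ₓW ≡ 1` reduce to `∂ₜρ + ∂ₓρ = 0`, `∂ₓq = -ρ/2` and
`∂ₜq = ρ/2`. The density `2 + sin (2π(x - t))` is a travelling wave, and
`q = 5 + t - x + cos (2π(x - t))/(4π)` is a primitive of `(ρ/2) dt - (ρ/2) dx`. -/

theorem HasDerivAt.vecCons₆ {f₀ f₁ f₂ f₃ f₄ f₅ : ℝ → ℝ} {a₀ a₁ a₂ a₃ a₄ a₅ x : ℝ}
    (h₀ : HasDerivAt f₀ a₀ x) (h₁ : HasDerivAt f₁ a₁ x) (h₂ : HasDerivAt f₂ a₂ x)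
    (h₃ : HasDerivAt f₃ a₃ x) (h₄ : HasDerivAt f₄ a₄ x) (h₅ : HasDerivAt f₅ a₅ x) :
    HasDerivAt (fun s => ![f₀ s, f₁ s, f₂ s, f₃ s, f₄ s, f₅ s]) ![a₀, a₁, a₂, a₃, a₄, a₅] x :=
  h₀.finCons <| h₁.finCons <| h₂.finCons <| h₃.finCons <| h₄.finCons <| h₅.finCons <|
    (hasDerivAt_const x ![]).congr_deriv (Subsingleton.elim _ _)

theorem consState_one_zero_zero_one (r q : ℝ) :
    consState r 1 0 q 0 1 = ![r, r, 0, (q + r) / 2, 0, 1 / 2] := by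
  ext i; fin_cases i <;> simp [consState]

theorem fluxX_consState_one_zero_zero_one {r : ℝ} (q : ℝ) (hr : r ≠ 0) :
    fluxX (consState r 1 0 q 0 1) = ![r, r + q, 0, (q + r) / 2 + q, 0, 1 / 2] := by
  ext i
  fin_cases i <;> simp [fluxX, consState, rho, v1, v2, p11, p12, sq, hr] <;> ring

theorem src_one_consState_one_zero_zero_one {r : ℝ} (q : ℝ) (hr : r ≠ 0) :
    src 1 (consState r 1 0 q 0 1) = ![0, -r / 2, 0, -r / 2, 0, 0] := by
  ext i
  fin_cases i <;> simp [src, consState, rho, v1, v2, hr]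

theorem tenMoment_balance_of_advection {ρ q : ℝ → ℝ → ℝ} {x t ρ' : ℝ}
    (hρt : HasDerivAt (fun s => ρ x s) (-ρ') t) (hρx : HasDerivAt (fun y => ρ y t) ρ' x)
    (hqt : HasDerivAt (fun s => q x s) (ρ x t / 2) t)
    (hqx : HasDerivAt (fun y => q y t) (-(ρ x t / 2)) x) (hρ : ρ x t ≠ 0) :
    ∃ ut ux : Fin 6 → ℝ,
      HasDerivAt (fun s => consState (ρ x s) 1 0 (q x s) 0 1) ut t ∧
      HasDerivAt (fun y => fluxX (consState (ρ y t) 1 0 (q y t) 0 1)) ux x ∧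
      ut + ux = src 1 (consState (ρ x t) 1 0 (q x t) 0 1) := by
  have hu : HasDerivAt (fun s => consState (ρ x s) 1 0 (q x s) 0 1)
      ![-ρ', -ρ', 0, (ρ x t / 2 + -ρ') / 2, 0, 0] t := by
    simp only [consState_one_zero_zero_one]
    exact hρt.vecCons₆ hρt (hasDerivAt_const _ _) ((hqt.add hρt).div_const 2)
      (hasDerivAt_const _ _) (hasDerivAt_const _ _)
  have hf : HasDerivAt (fun y => fluxX (consState (ρ y t) 1 0 (q y t) 0 1))
      ![ρ', ρ' + -(ρ x t / 2), 0, (-(ρ x t / 2) + ρ') / 2 + -(ρ x t / 2), 0, 0] x := by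
    refine (HasDerivAt.vecCons₆ hρx (hρx.add hqx) (hasDerivAt_const x 0)
      (((hqx.add hρx).div_const 2).add hqx) (hasDerivAt_const x 0)
      (hasDerivAt_const x (1 / 2))).congr_of_eventuallyEq ?_
    filter_upwards [hρx.continuousAt.eventually_ne hρ] with y hy
    exact fluxX_consState_one_zero_zero_one _ hy
  refine ⟨_, _, hu, hf, ?_⟩
  rw [src_one_consState_one_zero_zero_one _ hρ]
  ext i
  fin_cases i <;> simp <;> ring

open Real in
/-- With the potential `W(x) = x` (so `∂ₓW ≡ 1`), the fields
`ρ = 2 + sin(2π(x−t))`, `v₁ ≡ 1`, `v₂ ≡ 0`,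
`p₁₁ = 5 + t − x + cos(2π(x−t))/(4π)`, `p₁₂ ≡ 0`, `p₂₂ ≡ 1`
form a classical solution of the 1-D Ten-Moment system with source:
`∂ₜu + ∂ₓ f(u) = s(u)`. -/
theorem source_exact_solution_time_independent :
    ∀ x t : ℝ, ∃ ut ux : Fin 6 → ℝ,
      HasDerivAt (fun s : ℝ => consState (2 + sin (2 * π * (x - s))) 1 0
        (5 + s - x + cos (2 * π * (x - s)) / (4 * π)) 0 1) ut t ∧
      HasDerivAt (fun y : ℝ => fluxX (consState (2 + sin (2 * π * (y - t))) 1 0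
        (5 + t - y + cos (2 * π * (y - t)) / (4 * π)) 0 1)) ux x ∧
      ut + ux = src 1 (consState (2 + sin (2 * π * (x - t))) 1 0
        (5 + t - x + cos (2 * π * (x - t)) / (4 * π)) 0 1) := by
  intro x t
  have hρ (ξ : ℝ) : HasDerivAt (fun ξ => 2 + sin (2 * π * ξ)) (2 * π * cos (2 * π * ξ)) ξ :=
    ((((hasDerivAt_id' ξ).const_mul (2 * π)).sin).const_add 2).congr_deriv (by ring)
  have hG (ξ : ℝ) :
      HasDerivAt (fun ξ => cos (2 * π * ξ) / (4 * π)) (-(sin (2 * π * ξ) / 2)) ξ :=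
    ((((hasDerivAt_id' ξ).const_mul (2 * π)).cos).div_const (4 * π)).congr_deriv
      (by field_simp; ring)
  have hqt : HasDerivAt (fun s => 5 + s - x + cos (2 * π * (x - s)) / (4 * π))
      ((2 + sin (2 * π * (x - t))) / 2) t :=
    ((((hasDerivAt_id' t).const_add 5).sub_const x).add
      ((hG (x - t)).comp_const_sub x t)).congr_deriv (by ring)
  have hqx : HasDerivAt (fun y => 5 + t - y + cos (2 * π * (y - t)) / (4 * π))
      (-((2 + sin (2 * π * (x - t))) / 2)) x :=
    (((hasDerivAt_id' x).const_sub (5 + t)).add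
      ((hG (x - t)).comp_sub_const x t)).congr_deriv (by ring)
  exact tenMoment_balance_of_advection (ρ := fun y s => 2 + sin (2 * π * (y - s)))
    (q := fun y s => 5 + s - y + cos (2 * π * (y - s)) / (4 * π))
    ((hρ (x - t)).comp_const_sub x t) ((hρ (x - t)).comp_sub_const x t) hqt hqx
    (by linarith [neg_one_le_sin (2 * π * (x - t))])
end
end

section
/- (Density step of the positivity limiter.) Let ε > 0, ŵ ∈ (0,1), and let w, q, r ∈ ℝ⁶ satisfy (1 − ŵ)q + ŵr = w. Denote by ρ_w, ρ_q, ρ_r the first components of w, q, r, and assume ρ_w ≥ ε. Set ρ_min = min(ρ_q, ρ_r) and θ₁ = min{(ρ_w − ε)/(ρ_w − ρ_min), 1} if ρ_min < ε (in which case ρ_min < ρ_w so the quotient is defined), and θ₁ = 1 if ρ_min ≥ ε. Define the limited states q̂ = w + θ₁(q − w) and r̂ = w + θ₁(r − w). Then θ₁ ∈ [0,1], the first components of both q̂ and r̂ are ≥ ε, and the quadrature identity is preserved: (1 − ŵ)q̂ + ŵr̂ = w. -/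
/-!
Scaling toward `w` is affine in the scaled state, so it commutes with the combination
`(1 - ŵ) q + ŵ r` and the quadrature identity survives. On densities it is the map
`z ↦ ρ_w + θ (z - ρ_w)`, which is monotone for `θ ≥ 0`; `θ₁` is chosen precisely so that it
sends `ρ_min` to a value `≥ ε`, hence every density `≥ ρ_min` is sent above `ε` as well.
-/

section Quadrature

variable {R E : Type*} [CommRing R] [AddCommGroup E] [Module R E]

theorem one_sub_smul_add_smul_scaleToward_eq {a θ : R} {w q r : E}
    (h : (1 - a) • q + a • r = w) :
    (1 - a) • (w + θ • (q - w)) + a • (w + θ • (r - w)) = w := by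
  rw [← h]
  module

end Quadrature

section Density

noncomputable def densityScaling (ε ρw ρmin : ℝ) : ℝ :=
  if ρmin < ε then min ((ρw - ε) / (ρw - ρmin)) 1 else 1

variable {ε ρw ρmin : ℝ}

theorem densityScaling_nonneg (hw : ε ≤ ρw) : 0 ≤ densityScaling ε ρw ρmin := by
  unfold densityScaling
  split_ifs with h
  · exact le_min (div_nonneg (by linarith) (by linarith)) zero_le_one
  · exact zero_le_one

theorem densityScaling_le_one : densityScaling ε ρw ρmin ≤ 1 := by
  unfold densityScaling
  split_ifs
  exacts [min_le_right _ _, le_rfl]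

theorem le_add_densityScaling_mul_sub (hw : ε ≤ ρw) :
    ε ≤ ρw + densityScaling ε ρw ρmin * (ρmin - ρw) := by
  unfold densityScaling
  split_ifs with h
  · have hpos : 0 < ρw - ρmin := by linarith
    have : min ((ρw - ε) / (ρw - ρmin)) 1 * (ρw - ρmin) ≤ ρw - ε :=
      calc min ((ρw - ε) / (ρw - ρmin)) 1 * (ρw - ρmin)
          ≤ (ρw - ε) / (ρw - ρmin) * (ρw - ρmin) := by gcongr; exact min_le_left _ _
        _ = ρw - ε := div_mul_cancel₀ _ hpos.ne'
    linarith
  · linarith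

theorem le_add_densityScaling_mul_sub_of_le {z : ℝ} (hw : ε ≤ ρw) (hz : ρmin ≤ z) :
    ε ≤ ρw + densityScaling ε ρw ρmin * (z - ρw) :=
  (le_add_densityScaling_mul_sub (ρmin := ρmin) hw).trans <| by
    have := densityScaling_nonneg (ρmin := ρmin) hw
    gcongr

end Density

theorem density_limiter_step_general (ε what : ℝ)
    (w q r : Fin 6 → ℝ)
    (hquad : (1 - what) • q + what • r = w)
    (hw : w 0 ≥ ε)
    (θ : ℝ)
    (hθ : θ = if min (q 0) (r 0) < ε
      then min ((w 0 - ε) / (w 0 - min (q 0) (r 0))) 1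
      else 1) :
    θ ∈ Set.Icc (0 : ℝ) 1 ∧
    (w + θ • (q - w)) 0 ≥ ε ∧
    (w + θ • (r - w)) 0 ≥ ε ∧
    (1 - what) • (w + θ • (q - w)) + what • (w + θ • (r - w)) = w := by
  replace hθ : θ = densityScaling ε (w 0) (min (q 0) (r 0)) := hθ
  have hdensity : ∀ z : Fin 6 → ℝ, min (q 0) (r 0) ≤ z 0 → (w + θ • (z - w)) 0 ≥ ε := by
    intro z hz
    simpa only [hθ, Pi.add_apply, Pi.smul_apply, Pi.sub_apply, smul_eq_mul]
      using le_add_densityScaling_mul_sub_of_le hw hz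
  exact ⟨hθ ▸ ⟨densityScaling_nonneg hw, densityScaling_le_one⟩,
    hdensity q (min_le_left _ _), hdensity r (min_le_right _ _),
    one_sub_smul_add_smul_scaleToward_eq hquad⟩

/-- Density step of the positivity limiter: scaling the states `q`, `r` toward
the reference state `w` by the factor `θ₁` makes their densities at least `ε`
while preserving the quadrature identity `(1-ŵ)q + ŵr = w`. -/
theorem density_limiter_step (ε what : ℝ) (hε : 0 < ε)
    (hwhat : what ∈ Set.Ioo (0 : ℝ) 1)
    (w q r : Fin 6 → ℝ)
    (hquad : (1 - what) • q + what • r = w)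
    (hw : w 0 ≥ ε)
    (θ : ℝ)
    (hθ : θ = if min (q 0) (r 0) < ε
      then min ((w 0 - ε) / (w 0 - min (q 0) (r 0))) 1
      else 1) :
    θ ∈ Set.Icc (0 : ℝ) 1 ∧
    (w + θ • (q - w)) 0 ≥ ε ∧
    (w + θ • (r - w)) 0 ≥ ε ∧
    (1 - what) • (w + θ • (q - w)) + what • (w + θ • (r - w)) = w :=
  density_limiter_step_general ε what w q r hquad hw θ hθ
end
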